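/- Label coverage guarantee: Let Λ be a random probability vector over a finite label set Y with ℙ[Λ ∈ c] ≥ 1 − α, and let Y_{n+1} be a label that, conditionally on Λ = λ, is distributed according to λ. If S ⊆ Y satisfies inf_{λ∈c} Σ_{k∈S} λ_k ≥ 1 − δ, then ℙ[Y_{n+1} ∈ S] ≥ (1 − δ)(1 − α). -/

import Mathlib

open MeasureTheory
open scoped ENNReal ProbabilityTheory

/-!
Conditioning on `Λ`, the probability that the label falls in `S` on the event `Λ ∈ c` is
`∫_{Λ ∈ c} ∑_{k ∈ S} Λ_k`. On `c` the integrand is at least `1 - δ`, so this is at least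
`(1 - δ) ℙ[Λ ∈ c] ≥ (1 - δ)(1 - α)`.
-/

theorem integrableOn_eval_of_subset_stdSimplex {Y : Type*} [Fintype Y]
    {μ : Measure (Y → ℝ)} [IsFiniteMeasure μ] {s : Set (Y → ℝ)} (hs : s ⊆ stdSimplex ℝ Y)
    (k : Y) : IntegrableOn (fun l => l k) s μ :=
  ((continuous_apply k).continuousOn.integrableOn_compact (isCompact_stdSimplex ℝ Y)).mono_set hs

theorem measureReal_mem_and_mem_finset_eq_setIntegral_sum {Ω Y : Type*} [MeasurableSpace Ω]
    [MeasurableSpace Y] [MeasurableSingletonClass Y] {P : Measure Ω} [IsFiniteMeasure P]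
    {Λ : Ω → (Y → ℝ)} {Ylab : Ω → Y} (hY : Measurable Ylab) {B : Set (Y → ℝ)} {S : Finset Y}
    (hcond : ∀ k, P.real {ω | Λ ω ∈ B ∧ Ylab ω = k} = ∫ l in B, l k ∂P.map Λ)
    (hint : ∀ k ∈ S, IntegrableOn (fun l => l k) B (P.map Λ)) :
    P.real {ω | Λ ω ∈ B ∧ Ylab ω ∈ S} = ∫ l in B, ∑ k ∈ S, l k ∂P.map Λ := by
  have hfiber : ∀ k, (P.restrict (Λ ⁻¹' B)).real (Ylab ⁻¹' {k})
      = P.real {ω | Λ ω ∈ B ∧ Ylab ω = k} := fun k => by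
    rw [measureReal_restrict_apply (hY (measurableSet_singleton k)), Set.inter_comm]
    rfl
  rw [integral_finsetSum S hint, ← Finset.sum_congr rfl fun k _ => (hfiber k).trans (hcond k),
    sum_measureReal_preimage_singleton S fun k _ => hY (measurableSet_singleton k),
    measureReal_restrict_apply (hY S.measurableSet), Set.inter_comm]
  rfl

theorem label_coverage_general (Y : Type*) [Fintype Y] [MeasurableSpace Y]
    [MeasurableSingletonClass Y]
    (Ω : Type*) [MeasureSpace Ω] [IsProbabilityMeasure (ℙ : Measure Ω)]
    (Λ : Ω → (Y → ℝ)) (hΛ : Measurable Λ)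
    (Ylab : Ω → Y) (hY : Measurable Ylab)
    (hcond : ∀ B : Set (Y → ℝ), MeasurableSet B → ∀ k : Y,
      (ℙ {ω | Λ ω ∈ B ∧ Ylab ω = k}).toReal = ∫ l in B, l k ∂(Measure.map Λ ℙ))
    (c : Set (Y → ℝ)) (hc : MeasurableSet c)
    (hsimplex : ∀ l ∈ c, (∀ k, 0 ≤ l k) ∧ ∑ k, l k = 1)
    (α δ : ℝ) (hδ1 : δ ≤ 1)
    (hcov : (ℙ {ω | Λ ω ∈ c}).toReal ≥ 1 - α)
    (S : Finset Y)
    (hS : (⨅ l : c, ∑ k ∈ S, (l : Y → ℝ) k) ≥ 1 - δ) :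
    (ℙ {ω | Ylab ω ∈ S}).toReal ≥ (1 - δ) * (1 - α) := by
  have hsub : c ⊆ stdSimplex ℝ Y := hsimplex
  have hint : ∀ k, IntegrableOn (fun l => l k) c (Measure.map Λ ℙ) :=
    integrableOn_eval_of_subset_stdSimplex hsub
  have hbdd : BddBelow (Set.range fun l : c => ∑ k ∈ S, (l : Y → ℝ) k) :=
    ⟨0, by rintro _ ⟨l, rfl⟩; exact Finset.sum_nonneg fun k _ => (hsub l.2).1 k⟩
  have hbound : ∀ l ∈ c, 1 - δ ≤ ∑ k ∈ S, l k := fun l hl => hS.le.trans (ciInf_le hbdd ⟨l, hl⟩)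
  calc (1 - δ) * (1 - α)
      ≤ (1 - δ) * (Measure.map Λ ℙ).real c := by
        rw [map_measureReal_apply hΛ hc]
        exact mul_le_mul_of_nonneg_left hcov (by linarith)
    _ ≤ ∫ l in c, ∑ k ∈ S, l k ∂Measure.map Λ ℙ :=
        setIntegral_ge_of_const_le_real hc (measure_ne_top _ _) hbound
          (integrable_finsetSum S fun k _ => hint k)
    _ = (ℙ : Measure Ω).real {ω | Λ ω ∈ c ∧ Ylab ω ∈ S} :=
        (measureReal_mem_and_mem_finset_eq_setIntegral_sum hY (hcond c hc) fun k _ => hint k).symm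
    _ ≤ (ℙ : Measure Ω).real {ω | Ylab ω ∈ S} := measureReal_mono fun _ h => h.2

/-- Label coverage guarantee: if `ℙ[Λ ∈ c] ≥ 1 - α`, the label is conditionally
distributed according to `Λ`, and `inf_{l ∈ c} ∑_{k ∈ S} l k ≥ 1 - δ`, then
`ℙ[Y_{n+1} ∈ S] ≥ (1 - δ)(1 - α)`. -/
theorem label_coverage (Y : Type*) [Fintype Y] [MeasurableSpace Y]
    [MeasurableSingletonClass Y]
    (Ω : Type*) [MeasureSpace Ω] [IsProbabilityMeasure (ℙ : Measure Ω)]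
    (Λ : Ω → (Y → ℝ)) (hΛ : Measurable Λ)
    (Ylab : Ω → Y) (hY : Measurable Ylab)
    (hcond : ∀ B : Set (Y → ℝ), MeasurableSet B → ∀ k : Y,
      (ℙ {ω | Λ ω ∈ B ∧ Ylab ω = k}).toReal = ∫ l in B, l k ∂(Measure.map Λ ℙ))
    (c : Set (Y → ℝ)) (hc : MeasurableSet c) (hcne : c.Nonempty)
    (hsimplex : ∀ l ∈ c, (∀ k, 0 ≤ l k) ∧ ∑ k, l k = 1)
    (α δ : ℝ) (hα0 : 0 ≤ α) (hα1 : α ≤ 1) (hδ0 : 0 ≤ δ) (hδ1 : δ ≤ 1)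
    (hcov : (ℙ {ω | Λ ω ∈ c}).toReal ≥ 1 - α)
    (S : Finset Y)
    (hS : (⨅ l : c, ∑ k ∈ S, (l : Y → ℝ) k) ≥ 1 - δ) :
    (ℙ {ω | Ylab ω ∈ S}).toReal ≥ (1 - δ) * (1 - α) :=
  label_coverage_general Y Ω Λ hΛ Ylab hY hcond c hc hsimplex α δ hδ1 hcov S hS
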